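/- arXiv:1912.11864 — 2 statements merged into one kernel-verified Lean document; each statement's English description precedes it below -/
import Mathlib

section
/- Let k ≥ 1 and let φ be a Boolean function on V = {0,...,k}. If φ ≃ ⊥ (where ⊥ is the Boolean function with no satisfying valuation), then φ is fragmentable. -/
open scoped Classical

/-- Flip the membership of variable `l` in valuation `ν`. -/
def flipV {k : ℕ} (ν : Finset (Fin (k + 1))) (l : Fin (k + 1)) : Finset (Fin (k + 1)) :=
  if l ∈ ν then ν.erase l else insert l ν

/-- A Boolean function is degenerate if there is a variable on which it does not depend. -/
def Degenerate (k : ℕ) (φ : Finset (Fin (k + 1)) → Bool) : Prop :=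
  ∃ l : Fin (k + 1), ∀ ν, φ ν = φ (flipV ν l)

/-- Fragmentable Boolean functions: the smallest class of Boolean functions on `V` containing
all degenerate functions and closed under negation and under disjunction of two disjoint
members of the class. -/
inductive Fragmentable (k : ℕ) : (Finset (Fin (k + 1)) → Bool) → Prop
  | degen (φ) (h : Degenerate k φ) : Fragmentable k φ
  | neg (φ) (h : Fragmentable k φ) : Fragmentable k (fun ν => !(φ ν))
  | disj (φ ψ) (hφ : Fragmentable k φ) (hψ : Fragmentable k ψ)
      (hdisj : ∀ ν, ¬(φ ν = true ∧ ψ ν = true)) :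
      Fragmentable k (fun ν => φ ν || ψ ν)

/-- `φ →+ φ'`: there are `ν, l` with `ν ∉ sat(φ)`, `ν^(l) ∉ sat(φ)` and
`sat(φ') = sat(φ) ∪ {ν, ν^(l)}`. -/
def StepPlus (k : ℕ) (φ φ' : Finset (Fin (k + 1)) → Bool) : Prop :=
  ∃ (ν : Finset (Fin (k + 1))) (l : Fin (k + 1)),
    φ ν = false ∧ φ (flipV ν l) = false ∧
    ∀ μ, (φ' μ = true ↔ φ μ = true ∨ μ = ν ∨ μ = flipV ν l)

/-- `φ →− φ'`: remove two adjacent satisfying valuations. -/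
def StepMinus (k : ℕ) (φ φ' : Finset (Fin (k + 1)) → Bool) : Prop :=
  StepPlus k φ' φ

/-- `φ →± φ'`. -/
def StepPM (k : ℕ) (φ φ' : Finset (Fin (k + 1)) → Bool) : Prop :=
  StepPlus k φ φ' ∨ StepMinus k φ φ'

/-- The relation `≃` (equivalently `→±*`): the reflexive transitive closure of `→±`. -/
def EquivPM (k : ℕ) (φ φ' : Finset (Fin (k + 1)) → Bool) : Prop :=
  Relation.ReflTransGen (StepPM k) φ φ'

/-!
A step `φ →+ φ'` adds the edge `{ν, ν^(l)}` of the hypercube to `sat(φ)`. The indicator of such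
an edge does not depend on `l`, so it is degenerate, and `φ' = φ ∨ edge` is a disjoint
disjunction while `φ = φ' ∧ ¬edge = ¬(¬φ' ∨ edge)`. Hence fragmentability passes along `→±` in
both directions, and `⊥` is degenerate.
-/

lemma flipV_flipV {k : ℕ} (ν : Finset (Fin (k + 1))) (l : Fin (k + 1)) :
    flipV (flipV ν l) l = ν := by
  unfold flipV
  by_cases h : l ∈ ν
  · simp [h, Finset.insert_erase h]
  · simp [h, Finset.erase_insert h]

lemma flipV_eq_iff_eq_flipV {k : ℕ} {μ ν : Finset (Fin (k + 1))} {l : Fin (k + 1)} :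
    flipV μ l = ν ↔ μ = flipV ν l := by
  constructor <;> rintro rfl <;> rw [flipV_flipV]

def edgeIndicator {k : ℕ} (ν : Finset (Fin (k + 1))) (l : Fin (k + 1)) :
    Finset (Fin (k + 1)) → Bool :=
  fun μ => decide (μ = ν ∨ μ = flipV ν l)

lemma degenerate_edgeIndicator {k : ℕ} (ν : Finset (Fin (k + 1))) (l : Fin (k + 1)) :
    Degenerate k (edgeIndicator ν l) := by
  refine ⟨l, fun μ => ?_⟩
  simp only [edgeIndicator, decide_eq_decide, flipV_eq_iff_eq_flipV, flipV_flipV]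
  tauto

namespace Fragmentable

variable {k : ℕ} {φ ψ : Finset (Fin (k + 1)) → Bool}

lemma and_not (hφ : Fragmentable k φ) (hψ : Fragmentable k ψ)
    (hle : ∀ ν, ψ ν = true → φ ν = true) : Fragmentable k (fun ν => φ ν && !ψ ν) := by
  have hdisj : ∀ ν, ¬((!φ ν) = true ∧ ψ ν = true) := by
    rintro ν ⟨hφν, hψν⟩
    simp_all
  have h := neg _ (disj _ _ (neg _ hφ) hψ hdisj)
  simpa only [Bool.not_or, Bool.not_not] using h

end Fragmentable

namespace StepPlus

variable {k : ℕ} {φ φ' : Finset (Fin (k + 1)) → Bool}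

lemma exists_eq_or_edgeIndicator (h : StepPlus k φ φ') :
    ∃ ν l, (∀ μ, ¬(φ μ = true ∧ edgeIndicator ν l μ = true)) ∧
      φ' = fun μ => φ μ || edgeIndicator ν l μ := by
  obtain ⟨ν, l, hν, hνl, hsat⟩ := h
  refine ⟨ν, l, ?_, ?_⟩
  · rintro μ ⟨hμ, he⟩
    rcases of_decide_eq_true he with rfl | rfl <;> simp_all
  · funext μ
    rw [Bool.eq_iff_iff, hsat μ]
    simp [edgeIndicator]

lemma fragmentable (h : StepPlus k φ φ') (hφ : Fragmentable k φ) : Fragmentable k φ' := by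
  obtain ⟨ν, l, hdisj, rfl⟩ := h.exists_eq_or_edgeIndicator
  exact .disj _ _ hφ (.degen _ (degenerate_edgeIndicator ν l)) hdisj

lemma fragmentable_of_target (h : StepPlus k φ φ') (hφ' : Fragmentable k φ') :
    Fragmentable k φ := by
  obtain ⟨ν, l, hdisj, rfl⟩ := h.exists_eq_or_edgeIndicator
  have hφ : φ = fun μ => (φ μ || edgeIndicator ν l μ) && !edgeIndicator ν l μ := by
    funext μ
    have hμ := hdisj μ
    cases hφμ : φ μ <;> cases he : edgeIndicator ν l μ <;> simp [hφμ, he] at hμ ⊢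
  rw [hφ]
  exact hφ'.and_not (.degen _ (degenerate_edgeIndicator ν l)) fun μ he => by simp [he]

end StepPlus

theorem stmt5_general (k : ℕ) (φ : Finset (Fin (k + 1)) → Bool)
    (h : EquivPM k φ (fun _ => false)) : Fragmentable k φ := by
  induction h using Relation.ReflTransGen.head_induction_on with
  | refl => exact .degen _ ⟨0, fun _ => rfl⟩
  | head hstep _ ih =>
    rcases hstep with hplus | hminus
    · exact hplus.fragmentable_of_target ih
    · exact hminus.fragmentable ih

/-- if `φ ≃ ⊥` then `φ` is fragmentable. -/
theorem stmt5 (k : ℕ) (hk : 1 ≤ k) (φ : Finset (Fin (k + 1)) → Bool)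
    (h : EquivPM k φ (fun _ => false)) : Fragmentable k φ :=
  stmt5_general k φ h
end

section
/- Let k ≥ 1 and let φ be a Boolean function on V = {0,...,k} all of whose satisfying valuations have even size. Then there exists a Boolean function φ̌ on V in canonical form such that φ̌ ≃ φ. -/
/-! Replacing one satisfying valuation `ν` by an even non-satisfying `ν'` (i.e. composing `φ` with
the transposition of `ν` and `ν'`) preserves `≃`. When `ν` and `ν'` differ in exactly two variables
`l, l'`, the valuation `m = ν^(l)` between them is odd, hence not satisfying, so one may add
`{m, ν'}` and then remove `{m, ν}`. In general `|ν ∆ ν'|` is even, and the transposition is the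
conjugate of one at distance two by one at distance `|ν ∆ ν'| - 2`. Swapping the two sides of a bad
pair strictly lowers the total size of the satisfying valuations, so repeating it ends in a
canonical form. -/

open scoped Classical

/-- A Boolean function is in canonical form if every satisfying valuation has even size and
there is no bad pair: no even-size valuations `ν, ν'` with `|ν'| < |ν|`, `ν ∈ sat(φ)` and
`ν' ∉ sat(φ)`. -/
def CanonicalForm (k : ℕ) (φ : Finset (Fin (k + 1)) → Bool) : Prop :=
  (∀ ν, φ ν = true → Even ν.card) ∧
  ¬ ∃ ν ν' : Finset (Fin (k + 1)), Even ν.card ∧ Even ν'.card ∧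
      ν'.card < ν.card ∧ φ ν = true ∧ φ ν' = false

open Equiv Finset
open scoped symmDiff

theorem Finset.even_card_symmDiff_iff {α : Type*} [DecidableEq α] (s t : Finset α) :
    Even #(s ∆ t) ↔ (Even #s ↔ Even #t) := by
  have hst : #(s ∆ t) = #(s \ t) + #(t \ s) := by
    rw [symmDiff_def, sup_eq_union, card_union_of_disjoint disjoint_sdiff_sdiff]
  rw [hst, ← card_sdiff_add_card_inter s t, ← card_sdiff_add_card_inter t s, inter_comm t s]
  simp only [Nat.even_add]
  tauto

section

variable {k : ℕ} {φ ψ χ : Finset (Fin (k + 1)) → Bool} {ν a b m : Finset (Fin (k + 1))}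
  {l l' : Fin (k + 1)}

theorem flipV_eq_symmDiff (ν : Finset (Fin (k + 1))) (l : Fin (k + 1)) : flipV ν l = ν ∆ {l} := by
  ext x
  unfold flipV
  split_ifs with hl <;> by_cases hx : x = l <;> simp_all [mem_symmDiff]

theorem flipV_of_mem (hl : l ∈ ν) : flipV ν l = ν.erase l :=
  if_pos hl

theorem flipV_flipV_self (ν : Finset (Fin (k + 1))) (l : Fin (k + 1)) :
    flipV (flipV ν l) l = ν := by
  simp only [flipV_eq_symmDiff, symmDiff_symmDiff_cancel_right]

theorem flipV_ne_self (ν : Finset (Fin (k + 1))) (l : Fin (k + 1)) : flipV ν l ≠ ν := by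
  rw [flipV_eq_symmDiff, Ne, ← symmDiff_eq_bot, symmDiff_right_comm, symmDiff_self, bot_symmDiff]
  exact singleton_ne_empty l

theorem even_card_flipV (ν : Finset (Fin (k + 1))) (l : Fin (k + 1)) :
    Even #(flipV ν l) ↔ ¬Even #ν := by
  rw [flipV_eq_symmDiff, even_card_symmDiff_iff, card_singleton]
  simp

theorem EquivPM.trans (h₁ : EquivPM k φ ψ) (h₂ : EquivPM k ψ χ) : EquivPM k φ χ :=
  Relation.ReflTransGen.trans h₁ h₂

theorem EquivPM.symm (h : EquivPM k φ ψ) : EquivPM k ψ φ :=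
  have : Std.Symm (StepPM k) := ⟨fun _ _ => Or.symm⟩
  Std.Symm.symm (r := Relation.ReflTransGen (StepPM k)) _ _ h

theorem equivPM_comp_swap_of_eq (h : φ a = φ b) : EquivPM k φ (φ ∘ swap a b) := by
  rw [comp_swap_eq_update, h, Function.update_eq_self, ← h, Function.update_eq_self]
  exact Relation.ReflTransGen.refl

theorem equivPM_comp_swap_flipV_of_true_of_false (hm : φ m = false)
    (ha : φ (flipV m l) = true) (hc : φ (flipV m l') = false) :
    EquivPM k φ (φ ∘ swap (flipV m l) (flipV m l')) := by
  set a := flipV m l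
  set c := flipV m l'
  have hma : m ≠ a := fun h => by simp_all
  have hmc : m ≠ c := (flipV_ne_self m l').symm
  let ψ : Finset (Fin (k + 1)) → Bool := fun μ => φ μ || decide (μ = m ∨ μ = c)
  have hadd : StepPlus k φ ψ := ⟨m, l', hm, hc, fun μ => by simp [ψ, c]⟩
  have hremove : StepMinus k ψ (φ ∘ swap a c) := by
    refine ⟨m, l, ?_, ?_, fun μ => ?_⟩
    · simp [swap_apply_of_ne_of_ne hma hmc, hm]
    · simp [a, hc]
    · show ψ μ = true ↔ (φ ∘ swap a c) μ = true ∨ μ = m ∨ μ = a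
      by_cases hμa : μ = a
      · simp [ψ, hμa, ha]
      by_cases hμc : μ = c
      · simp [ψ, hμc, ha]
      simp [ψ, swap_apply_of_ne_of_ne hμa hμc, hμa, hμc]
  exact .tail (.single (Or.inl hadd)) (Or.inr hremove)

theorem equivPM_comp_swap_flipV (hm : φ m = false) (l l' : Fin (k + 1)) :
    EquivPM k φ (φ ∘ swap (flipV m l) (flipV m l')) := by
  cases ha : φ (flipV m l) <;> cases hc : φ (flipV m l')
  · exact equivPM_comp_swap_of_eq (ha.trans hc.symm)
  · rw [swap_comm]
    exact equivPM_comp_swap_flipV_of_true_of_false hm hc ha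
  · exact equivPM_comp_swap_flipV_of_true_of_false hm ha hc
  · exact equivPM_comp_swap_of_eq (ha.trans hc.symm)

def SatEven (φ : Finset (Fin (k + 1)) → Bool) : Prop :=
  ∀ ν, φ ν = true → Even #ν

theorem SatEven.eq_false (hφ : SatEven φ) (hν : ¬Even #ν) : φ ν = false :=
  Bool.eq_false_iff.mpr fun h => hν (hφ ν h)

theorem SatEven.comp_swap (hφ : SatEven φ) (ha : Even #a) (hb : Even #b) :
    SatEven (φ ∘ swap a b) := by
  intro ν hν
  by_cases hνa : ν = a
  · rwa [hνa]
  by_cases hνb : ν = b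
  · rwa [hνb]
  exact hφ ν (by rwa [Function.comp_apply, swap_apply_of_ne_of_ne hνa hνb] at hν)

theorem SatEven.equivPM_comp_swap (hφ : SatEven φ) (ha : Even #a) (hb : Even #b) :
    EquivPM k φ (φ ∘ swap a b) := by
  induction hn : #(a ∆ b) using Nat.strong_induction_on generalizing φ a b with
  | _ n ih =>
  obtain rfl | hab := eq_or_ne a b
  · rw [swap_self, coe_refl, Function.comp_id]
    exact Relation.ReflTransGen.refl
  have hn₂ : 1 < n := by
    have hpos : 0 < n := hn ▸ card_pos.mpr (symmDiff_nonempty.mpr hab)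
    have heven : Even n := hn ▸ (even_card_symmDiff_iff a b).mpr (iff_of_true ha hb)
    obtain ⟨j, rfl⟩ := heven
    omega
  obtain ⟨l, hl, l', hl', hll'⟩ := one_lt_card.mp (hn ▸ hn₂)
  set m := flipV a l
  set c := flipV m l'
  have hm : ¬Even #m := fun h => (even_card_flipV a l).mp h ha
  have hc : Even #c := (even_card_flipV m l').mpr hm
  have hcb : #(c ∆ b) = n - 2 := by
    have : c ∆ b = flipV (flipV (a ∆ b) l) l' := by
      simp only [c, m, flipV_eq_symmDiff]
      rw [symmDiff_right_comm _ _ b, symmDiff_right_comm a]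
    rw [this, flipV_of_mem hl, flipV_of_mem (mem_erase.mpr ⟨hll'.symm, hl'⟩),
      card_erase_of_mem (mem_erase.mpr ⟨hll'.symm, hl'⟩), card_erase_of_mem hl, hn]
    omega
  have hac : a ≠ c := fun h => by
    have hlc := congrArg (l ∈ ·) h
    simp [c, m, flipV_eq_symmDiff, mem_symmDiff, hll'] at hlc
  have hconj : swap a b = swap c b * swap a c * swap c b := by
    rw [swap_mul_swap_mul_swap hac hab, swap_comm]
  have h₁ : EquivPM k φ (φ ∘ swap c b) := ih _ (by omega) hφ hc hb hcb
  have h₂ : EquivPM k (φ ∘ swap c b) (φ ∘ swap c b ∘ swap a c) := by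
    rw [← flipV_flipV_self a l]
    exact equivPM_comp_swap_flipV ((hφ.comp_swap hc hb).eq_false hm) l l'
  have h₃ : EquivPM k (φ ∘ swap c b ∘ swap a c) (φ ∘ swap c b ∘ swap a c ∘ swap c b) :=
    ih _ (by omega) ((hφ.comp_swap hc hb).comp_swap ha hc) hc hb hcb
  rw [hconj]
  exact h₁.trans (h₂.trans h₃)

def weight (φ : Finset (Fin (k + 1)) → Bool) : ℕ :=
  ∑ ν, if φ ν then #ν else 0

theorem weight_comp_swap_lt (ha : φ a = true) (hb : φ b = false) (hlt : #b < #a) :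
    weight (φ ∘ swap a b) < weight φ := by
  have hreindex : weight (φ ∘ swap a b) = ∑ ν, if φ ν then #(swap a b ν) else 0 := by
    rw [weight, ← Equiv.sum_comp (swap a b)]
    simp only [Function.comp_apply, swap_apply_self]
  rw [hreindex, weight]
  refine sum_lt_sum (fun ν _ => ?_) ⟨a, mem_univ a, by simpa [ha] using hlt⟩
  split_ifs with hν
  · by_cases hνa : ν = a
    · simpa [hνa] using hlt.le
    · have hνb : ν ≠ b := by rintro rfl; simp_all
      rw [swap_apply_of_ne_of_ne hνa hνb]
  · rfl

theorem SatEven.exists_canonicalForm_equivPM (hφ : SatEven φ) :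
    ∃ φc, CanonicalForm k φc ∧ EquivPM k φ φc := by
  induction hn : weight φ using Nat.strong_induction_on generalizing φ with
  | _ n ih =>
  by_cases hcan : CanonicalForm k φ
  · exact ⟨φ, hcan, Relation.ReflTransGen.refl⟩
  obtain ⟨ν, ν', hν, hν', hlt, hφν, hφν'⟩ := not_not.mp (not_and.mp hcan hφ)
  obtain ⟨φc, hφc, hequiv⟩ :=
    ih _ (hn ▸ weight_comp_swap_lt hφν hφν' hlt) (hφ.comp_swap hν hν') rfl
  exact ⟨φc, hφc, (hφ.equivPM_comp_swap hν hν').trans hequiv⟩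

end

theorem stmt13_general (k : ℕ) (φ : Finset (Fin (k + 1)) → Bool)
    (h : ∀ ν, φ ν = true → Even ν.card) :
    ∃ φc : Finset (Fin (k + 1)) → Bool, CanonicalForm k φc ∧ EquivPM k φc φ := by
  obtain ⟨φc, hφc, hequiv⟩ := SatEven.exists_canonicalForm_equivPM h
  exact ⟨φc, hφc, hequiv.symm⟩

/-- if all satisfying valuations of `φ` have even size, then there is a
Boolean function `φ̌` in canonical form with `φ̌ ≃ φ`. -/
theorem stmt13 (k : ℕ) (hk : 1 ≤ k) (φ : Finset (Fin (k + 1)) → Bool)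
    (h : ∀ ν, φ ν = true → Even ν.card) :
    ∃ φc : Finset (Fin (k + 1)) → Bool, CanonicalForm k φc ∧ EquivPM k φc φ :=
  stmt13_general k φ h
end
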